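/- If X is a binomial random variable with parameters n and p, and 0 < ε ≤ 3/2, then P(|X - E[X]| ≥ ε E[X]) ≤ 2 exp(-ε² E[X] / 3). -/

import Mathlib

open scoped Classical

/-- Weight of an outcome `ω` of `n` independent Bernoulli(p) trials. -/
noncomputable def binWeight (n : ℕ) (p : ℝ) (ω : Fin n → Bool) : ℝ :=
  ∏ i, if ω i then p else 1 - p

/-- Probability of an event in the binomial model `B(n,p)`. -/
noncomputable def binProb (n : ℕ) (p : ℝ) (E : (Fin n → Bool) → Prop) : ℝ :=
  ∑ ω : Fin n → Bool, if E ω then binWeight n p ω else 0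

/-- The number of successes in the outcome `ω`. -/
def binCount {n : ℕ} (ω : Fin n → Bool) : ℕ :=
  (Finset.univ.filter fun i => ω i = true).card

/-! Chernoff's method: Markov's inequality applied to `exp (t * X)`, whose expectation is the
binomial moment generating function `(1 - p + p eᵗ)ⁿ ≤ exp (n p (eᵗ - 1))`. Choosing
`t = ±3ε/5` and bounding `eᵗ` by its cubic Taylor polynomial makes each tail at most
`exp (-ε² n p / 3)`. -/

open Real

lemma binWeight_nonneg {n : ℕ} {p : ℝ} (hp0 : 0 ≤ p) (hp1 : p ≤ 1) (ω : Fin n → Bool) :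
    0 ≤ binWeight n p ω :=
  Finset.prod_nonneg fun i _ => by cases ω i <;> simp [hp0, hp1]

lemma binProb_le_add {n : ℕ} {p : ℝ} (hp0 : 0 ≤ p) (hp1 : p ≤ 1)
    {E E₁ E₂ : (Fin n → Bool) → Prop} (h : ∀ ω, E ω → E₁ ω ∨ E₂ ω) :
    binProb n p E ≤ binProb n p E₁ + binProb n p E₂ := by
  rw [binProb, binProb, binProb, ← Finset.sum_add_distrib]
  refine Finset.sum_le_sum fun ω _ => ?_
  have hw := binWeight_nonneg hp0 hp1 ω
  by_cases hE : E ω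
  · rcases h ω hE with h₁ | h₂ <;> split_ifs <;> linarith
  · split_ifs <;> linarith

lemma sum_binWeight_mul_exp_binCount (n : ℕ) (p t : ℝ) :
    ∑ ω : Fin n → Bool, binWeight n p ω * exp (t * binCount ω) =
      (1 - p + p * exp t) ^ n := by
  have factor (ω : Fin n → Bool) : binWeight n p ω * exp (t * binCount ω) =
      ∏ i, if ω i then p * exp t else 1 - p := by
    rw [binWeight, binCount, mul_comm t, exp_nat_mul, ← Finset.prod_const,
      Finset.prod_filter, ← Finset.prod_mul_distrib]
    exact Finset.prod_congr rfl fun i _ => by cases ω i <;> simp [mul_comm]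
  have hbool : 1 - p + p * exp t = ∑ b : Bool, if b then p * exp t else 1 - p := by
    simp [add_comm]
  simp only [factor]
  rw [hbool, Fintype.sum_pow]

lemma one_sub_add_mul_exp_pow_le {p : ℝ} (hp0 : 0 ≤ p) (hp1 : p ≤ 1) (n : ℕ) (t : ℝ) :
    (1 - p + p * exp t) ^ n ≤ exp (n * p * (exp t - 1)) := by
  have hbase : 0 ≤ 1 - p + p * exp t := by nlinarith [exp_pos t]
  calc (1 - p + p * exp t) ^ n ≤ exp (p * (exp t - 1)) ^ n := by
        gcongr
        linarith [add_one_le_exp (p * (exp t - 1))]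
    _ = exp (n * p * (exp t - 1)) := by rw [← exp_nat_mul, mul_assoc]

lemma binProb_le_exp_of_mul_le {n : ℕ} {p : ℝ} (hp0 : 0 ≤ p) (hp1 : p ≤ 1)
    {E : (Fin n → Bool) → Prop} (t a : ℝ) (hE : ∀ ω, E ω → t * a ≤ t * binCount ω) :
    binProb n p E ≤ exp (n * p * (exp t - 1) - t * a) := by
  calc binProb n p E ≤ ∑ ω, binWeight n p ω * exp (t * binCount ω - t * a) := by
        refine Finset.sum_le_sum fun ω _ => ?_
        have hw := binWeight_nonneg hp0 hp1 ω
        split_ifs with h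
        · exact le_mul_of_one_le_right hw (one_le_exp (sub_nonneg.2 (hE ω h)))
        · positivity
    _ = exp (-(t * a)) * (1 - p + p * exp t) ^ n := by
        rw [← sum_binWeight_mul_exp_binCount, Finset.mul_sum]
        refine Finset.sum_congr rfl fun ω _ => ?_
        rw [sub_eq_add_neg, exp_add]
        ring
    _ ≤ exp (-(t * a)) * exp (n * p * (exp t - 1)) := by
        gcongr
        exact one_sub_add_mul_exp_pow_le hp0 hp1 n t
    _ = exp (n * p * (exp t - 1) - t * a) := by rw [← exp_add]; ring_nf

lemma exp_sub_one_sub_le {y : ℝ} (hy : |y| ≤ 1) :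
    exp y - 1 - y ≤ y ^ 2 / 2 + 2 / 9 * |y| ^ 3 := by
  have h := (abs_sub_le_iff.1 (exp_bound hy (n := 3) (by norm_num))).1
  norm_num [Finset.sum_range_succ, Nat.factorial] at h
  linarith

/-- The exponent of a one-sided Chernoff bound at `t = ±3ε/5`, divided by `n p`. -/
lemma exp_sub_one_sub_sub_mul_le {ε t : ℝ} (hε0 : 0 ≤ ε) (hε : ε ≤ 3 / 2) (ht : |t| = 3 * ε / 5) :
    exp t - 1 - t - |t| * ε ≤ -(ε ^ 2 / 3) := by
  have hcubic := exp_sub_one_sub_le (y := t) (by rw [ht]; linarith)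
  rw [ht, ← sq_abs, ht] at hcubic
  rw [ht]
  nlinarith [mul_nonneg (mul_nonneg hε0 hε0) (sub_nonneg.2 hε)]

section Tails

variable {n : ℕ} {p ε : ℝ} (hp0 : 0 ≤ p) (hp1 : p ≤ 1) (hε0 : 0 ≤ ε) (hε : ε ≤ 3 / 2)
include hp0 hp1 hε0 hε

lemma binProb_upper_tail_le :
    binProb n p (fun ω => (1 + ε) * (n * p) ≤ binCount ω) ≤ exp (-(ε ^ 2 * (n * p) / 3)) := by
  have ht : |3 * ε / 5| = 3 * ε / 5 := abs_of_nonneg (by positivity)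
  refine (binProb_le_exp_of_mul_le hp0 hp1 (3 * ε / 5) _
    fun ω h => mul_le_mul_of_nonneg_left h (by positivity)).trans (exp_le_exp.2 ?_)
  have hexp := exp_sub_one_sub_sub_mul_le hε0 hε ht
  rw [ht] at hexp
  nlinarith [mul_le_mul_of_nonneg_left hexp (by positivity : (0 : ℝ) ≤ n * p)]

lemma binProb_lower_tail_le :
    binProb n p (fun ω => binCount ω ≤ (1 - ε) * (n * p)) ≤ exp (-(ε ^ 2 * (n * p) / 3)) := by
  have ht : |-(3 * ε / 5)| = 3 * ε / 5 := by rw [abs_neg]; exact abs_of_nonneg (by positivity)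
  refine (binProb_le_exp_of_mul_le hp0 hp1 (-(3 * ε / 5)) _
    fun ω h => mul_le_mul_of_nonpos_left h (by linarith)).trans (exp_le_exp.2 ?_)
  have hexp := exp_sub_one_sub_sub_mul_le hε0 hε ht
  rw [ht] at hexp
  nlinarith [mul_le_mul_of_nonneg_left hexp (by positivity : (0 : ℝ) ≤ n * p)]

end Tails

/-- Multiplicative Chernoff bound: if `X ∈ B(n,p)` and `0 < ε ≤ 3/2`, then
`P(|X - E[X]| ≥ ε E[X]) ≤ 2 exp(-ε² E[X]/3)`, where `E[X] = np`. -/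
theorem chernoff_multiplicative (n : ℕ) (p ε : ℝ) (hp0 : 0 < p) (hp1 : p ≤ 1)
    (hε0 : 0 < ε) (hε : ε ≤ 3 / 2) :
    binProb n p (fun ω => |(binCount ω : ℝ) - (n : ℝ) * p| ≥ ε * ((n : ℝ) * p)) ≤
      2 * Real.exp (-(ε ^ 2 * ((n : ℝ) * p) / 3)) := by
  have hsplit : ∀ ω : Fin n → Bool, |(binCount ω : ℝ) - n * p| ≥ ε * (n * p) →
      (1 + ε) * (n * p) ≤ binCount ω ∨ (binCount ω : ℝ) ≤ (1 - ε) * (n * p) := by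
    intro ω h
    rcases le_abs.1 h with h | h
    · left; linarith
    · right; linarith
  calc _ ≤ _ + _ := binProb_le_add hp0.le hp1 hsplit
    _ ≤ exp (-(ε ^ 2 * (n * p) / 3)) + exp (-(ε ^ 2 * (n * p) / 3)) :=
        add_le_add (binProb_upper_tail_le hp0.le hp1 hε0.le hε)
          (binProb_lower_tail_le hp0.le hp1 hε0.le hε)
    _ = 2 * exp (-(ε ^ 2 * (n * p) / 3)) := by ring
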